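/- Let f: {0,1}^n → {0,1}^n be a quasi-Hamiltonian Boolean network: its dynamics consist of one fixed point p and one cycle of length 2^n − 1 containing all other states. Then the interaction graph G(f) is strongly connected (provided n ≥ 2). -/

import Mathlib

def flipBit {n : ℕ} (x : Fin n → Bool) (i : Fin n) : Fin n → Bool :=
  Function.update x i (!(x i))

def Dep {n : ℕ} (f : (Fin n → Bool) → (Fin n → Bool)) (i j : Fin n) : Prop :=
  ∃ x : Fin n → Bool, f x j ≠ f (flipBit x i) j

/-!
Suppose `i` does not reach `j` in the interaction graph, and let `s` be the set of vertices
that reach `j`. Then `i ∉ s`, `j ∈ s`, and the coordinates in `s` evolve autonomously: the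
restriction to `s` semiconjugates `f` to a network `g` on `{0,1}^s`. The orbit of any state
`x ≠ p` has `2^n - 1` elements, so it misses a single state; since every fibre of the restriction
contains two states (differing at `i`), the `g`-orbit of the restriction of `x` is all of
`{0,1}^s`. Its period `2^|s|` is even and divides the odd period `2^n - 1` of `x`.
-/

open Function Set Relation

theorem Set.subsingleton_compl_of_card_le_ncard_add_one {α : Type*} [Finite α] {O : Set α}
    (h : Nat.card α ≤ O.ncard + 1) : Oᶜ.Subsingleton := by
  rw [← ncard_le_one_iff_subsingleton]
  have := ncard_add_ncard_compl O
  omega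

namespace Function

variable {α β : Type*} {f : α → α} {x : α}

theorem minimalPeriod_eq_of_isLeast {m : ℕ} (h : IsLeast {k | 0 < k ∧ f^[k] x = x} m) :
    minimalPeriod f x = m :=
  minimalPeriod_eq_sInf_n_pos_IsPeriodicPt.trans h.csInf_eq

theorem ncard_range_iterate (hx : x ∈ periodicPts f) :
    (range (f^[·] x)).ncard = minimalPeriod f x := by
  have hrange : range (f^[·] x) = (f^[·] x) '' Iio (minimalPeriod f x) := by
    refine (image_subset_range _ _).antisymm' ?_
    rintro _ ⟨k, rfl⟩
    exact ⟨k % minimalPeriod f x, Nat.mod_lt _ (minimalPeriod_pos_of_mem_periodicPts hx),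
      iterate_mod_minimalPeriod_eq⟩
  rw [hrange, iterate_injOn_Iio_minimalPeriod.ncard_image, ncard_Iio_nat]

variable {π : α → β} {g : β → β}

theorem Semiconj.range_iterate (h : Semiconj π f g) (x : α) :
    range (g^[·] (π x)) = π '' range (f^[·] x) := by
  rw [← range_comp]
  exact congrArg range (funext fun k => (h.iterate_right k x).symm)

theorem Semiconj.minimalPeriod_dvd (h : Semiconj π f g) (x : α) :
    minimalPeriod g (π x) ∣ minimalPeriod f x :=
  ((isPeriodicPt_minimalPeriod f x).map h).minimalPeriod_dvd

end Function

theorem exists_semiconj_domRestrict_of_dependsOn {ι : Type*} {α : ι → Type*}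
    [∀ i, Nonempty (α i)] {F : (Π i, α i) → Π i, α i} {s : Set ι}
    (hF : ∀ i ∈ s, DependsOn (F · i) s) : ∃ g, Semiconj s.domRestrict F g := by
  have hdep : DependsOn (s.domRestrict ∘ F) s := fun _ _ hxy => funext fun i => hF i i.2 hxy
  obtain ⟨g, hg⟩ := dependsOn_iff_exists_comp.mp hdep
  exact ⟨g, fun x => congrFun hg x⟩

section BooleanNetwork

variable {n : ℕ} {f : (Fin n → Bool) → (Fin n → Bool)}

theorem flipBit_ne (x : Fin n → Bool) (i : Fin n) : flipBit x i ≠ x :=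
  fun h => Bool.not_ne_self (x i) (by simpa [flipBit] using congrFun h i)

theorem domRestrict_flipBit {s : Set (Fin n)} {i : Fin n} (hi : i ∉ s) (x : Fin n → Bool) :
    s.domRestrict (flipBit x i) = s.domRestrict x :=
  funext fun k => update_of_ne (ne_of_mem_of_not_mem k.2 hi) _ _

theorem apply_update_of_not_dep {k j : Fin n} (h : ¬ Dep f k j) (x : Fin n → Bool) (b : Bool) :
    f (update x k b) j = f x j := by
  by_cases hb : b = x k
  · rw [hb, update_eq_self]
  · have hflip : update x k b = flipBit x k := by
      rw [flipBit, Bool.eq_not_of_ne hb]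
    exact hflip ▸ (not_not.mp (not_exists.mp h x)).symm

theorem dependsOn_of_dep_mem {s : Set (Fin n)} {j : Fin n} (h : ∀ k, Dep f k j → k ∈ s) :
    DependsOn (f · j) s := by
  intro x y hxy
  -- Move from `x` to `y` one differing coordinate at a time; each such coordinate lies outside
  -- `s`, so it is not an in-neighbour of `j`.
  suffices ∀ D : Finset (Fin n), ∀ x, (∀ k ∉ D, x k = y k) → (∀ k ∈ s, x k = y k) →
      f x j = f y j from this Finset.univ x (by simp) hxy
  intro D
  induction D using Finset.induction_on with
  | empty => exact fun x hx _ => congrArg (f · j) (funext fun k => hx k (Finset.notMem_empty k))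
  | insert a D _ ih =>
    intro x hx hs
    have hupdate : f (update x a (y a)) j = f x j := by
      by_cases hdep : Dep f a j
      · rw [← hs a (h a hdep), update_eq_self]
      · exact apply_update_of_not_dep hdep x _
    have hagree : ∀ k, k = a ∨ x k = y k → update x a (y a) k = y k := by
      intro k hk
      rw [update_apply]
      split_ifs with hka
      · rw [hka]
      · exact hk.resolve_left hka
    rw [← hupdate]
    exact ih _ (fun k hk => hagree k (or_iff_not_imp_left.mpr fun hka => hx k (by simp [hk, hka])))
      (fun k hk => hagree k (.inr (hs k hk)))

theorem image_domRestrict_eq_univ {s : Set (Fin n)} {i : Fin n} (hi : i ∉ s)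
    {O : Set (Fin n → Bool)} (hO : Oᶜ.Subsingleton) : s.domRestrict '' O = univ := by
  refine eq_univ_of_forall fun y => ?_
  classical
  set x : Fin n → Bool := fun k => if hk : k ∈ s then y ⟨k, hk⟩ else false
  have hxy : s.domRestrict x = y := funext fun k => dif_pos k.2
  by_cases hx : x ∈ O
  · exact ⟨x, hx, hxy⟩
  · have hflip : flipBit x i ∈ O := by
      by_contra h
      exact flipBit_ne x i (hO h hx)
    exact ⟨flipBit x i, hflip, (domRestrict_flipBit hi x).trans hxy⟩

end BooleanNetwork

theorem stmt18_general {n : ℕ} (f : (Fin n → Bool) → (Fin n → Bool))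
    (p : Fin n → Bool)
    (hcyc : ∀ x : Fin n → Bool, x ≠ p →
      IsLeast {k : ℕ | 0 < k ∧ f^[k] x = x} (2 ^ n - 1)) :
    ∀ i j : Fin n, Relation.ReflTransGen (Dep f) i j := by
  intro i j
  by_contra hij
  set s := {k | ReflTransGen (Dep f) k j}
  have : Nonempty s := ⟨⟨j, .refl⟩⟩
  obtain ⟨g, hg⟩ := exists_semiconj_domRestrict_of_dependsOn (F := f) (s := s) fun _ hk =>
    dependsOn_of_dep_mem fun _ hdep => hk.head hdep
  set x := flipBit p j
  have hcycx := hcyc x (flipBit_ne p j)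
  have hx : minimalPeriod f x = 2 ^ n - 1 := minimalPeriod_eq_of_isLeast hcycx
  have hxper : x ∈ periodicPts f := mk_mem_periodicPts hcycx.1.1 hcycx.1.2
  have horbit : (range (f^[·] x))ᶜ.Subsingleton := by
    refine subsingleton_compl_of_card_le_ncard_add_one ?_
    simp [ncard_range_iterate hxper, hx, Nat.sub_add_cancel Nat.one_le_two_pow]
  have hgx : minimalPeriod g (s.domRestrict x) = 2 ^ Nat.card s := by
    rw [← ncard_range_iterate (hg.mapsTo_periodicPts hxper), hg.range_iterate,
      image_domRestrict_eq_univ (s := s) hij horbit, ncard_univ, Nat.card_fun]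
    simp
  have hodd : 2 ∣ 2 ^ n - 1 := calc
    2 ∣ 2 ^ Nat.card s := dvd_pow_self 2 Nat.card_pos.ne'
    _ = minimalPeriod g (s.domRestrict x) := hgx.symm
    _ ∣ minimalPeriod f x := hg.minimalPeriod_dvd x
    _ = 2 ^ n - 1 := hx
  have heven : 2 ∣ 2 ^ n := dvd_pow_self 2 j.pos.ne'
  have hpos := Nat.one_le_two_pow (n := n)
  omega

/-- A quasi-Hamiltonian Boolean network (one fixed point plus a cycle of length
`2^n - 1` through all other states) has a strongly connected interaction graph. -/
theorem stmt18 {n : ℕ} (hn : 2 ≤ n) (f : (Fin n → Bool) → (Fin n → Bool))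
    (p : Fin n → Bool) (hp : f p = p)
    (hcyc : ∀ x : Fin n → Bool, x ≠ p →
      IsLeast {k : ℕ | 0 < k ∧ f^[k] x = x} (2 ^ n - 1)) :
    ∀ i j : Fin n, Relation.ReflTransGen (Dep f) i j :=
  stmt18_general f p hcyc
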